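/- arXiv:1510.04528 — 3 statements merged into one kernel-verified Lean document; each statement's English description precedes it below -/
import Mathlib

section
/- Let X and Y be real Hilbert spaces, A : X → X and C : X → Y bounded linear operators, T > 0, f : [0,T] → X continuous, and y ∈ L²(0,T;Y). Let J(x) := ½ ∫₀ᵀ ‖y(s) − C z[x](s)‖² ds where z[x](t) := e^{tA} x + ∫₀ᵗ e^{(t−s)A} f(s) ds. Then a point x° ∈ X minimizes J (i.e. J(x°) ≤ J(x) for all x) if and only if ∫₀ᵀ e^{sA*} C* ( y(s) − C z[x°](s) ) ds = 0, where the integral is a Bochner integral in X; equivalently, ∫₀ᵀ ⟨ y(s) − C z[x°](s), C e^{sA} h ⟩ ds = 0 for all h ∈ X. -/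
open MeasureTheory NormedSpace ContinuousLinearMap Set

/-- The mild solution `z[x](t) = e^{tA} x + ∫₀ᵗ e^{(t−s)A} f(s) ds` of
`ż = Az + f`, `z(0) = x`, for a bounded generator `A`. -/
noncomputable def mildSol {X : Type*} [NormedAddCommGroup X] [InnerProductSpace ℝ X]
    [CompleteSpace X] (A : X →L[ℝ] X) (f : ℝ → X) (x : X) (t : ℝ) : X :=
  exp (t • A) x + ∫ s in (0:ℝ)..t, exp ((t - s) • A) (f s)

/-- The output-error cost `J(x) = ½ ∫₀ᵀ ‖y(s) − C z[x](s)‖² ds`. -/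
noncomputable def outputCost {X Y : Type*} [NormedAddCommGroup X] [InnerProductSpace ℝ X]
    [CompleteSpace X] [NormedAddCommGroup Y] [InnerProductSpace ℝ Y] [CompleteSpace Y]
    (A : X →L[ℝ] X) (C : X →L[ℝ] Y) (f : ℝ → X) (y : ℝ → Y) (T : ℝ) (x : X) : ℝ :=
  (1 / 2) * ∫ s in (0:ℝ)..T, ‖y s - C (mildSol A f x s)‖ ^ 2

/-! Since `z[x] = z[x°] + e^{·A} (x - x°)`, the cost is quadratic in `x - x°`:
`J x = J x° - ⟪x - x°, v⟫ + ½ ∫₀ᵀ ‖C e^{sA} (x - x°)‖² ds`, where `v` is the left-hand side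
of the normal equation (moving `C` and `e^{sA}` across the inner product produces their
adjoints). The quadratic part is nonnegative and homogeneous of degree two, so `x°` is a
minimizer iff the linear part vanishes: testing `x = x° + t v` and letting `t ↓ 0` forces
`‖v‖² ≤ 0`. -/

open RealInnerProductSpace Filter Topology

theorem nonpos_of_forall_pos_le_mul {a b : ℝ} (h : ∀ t > 0, a ≤ t * b) : a ≤ 0 :=
  ge_of_tendsto (x := 𝓝[>] 0)
    (((continuous_mul_const b).tendsto' 0 0 (zero_mul b)).mono_left nhdsWithin_le_nhds)
    (eventually_nhdsWithin_of_forall h)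

theorem forall_le_iff_eq_zero_of_eq_sub_inner_add {E : Type*} [NormedAddCommGroup E]
    [InnerProductSpace ℝ E] {J q : E → ℝ} {x₀ v : E} (hq_nonneg : ∀ h, 0 ≤ q h)
    (hq_smul : ∀ (t : ℝ) h, q (t • h) = t ^ 2 * q h)
    (hJ : ∀ x, J x = J x₀ - ⟪x - x₀, v⟫ + q (x - x₀)) :
    (∀ x, J x₀ ≤ J x) ↔ v = 0 := by
  refine ⟨fun hmin => ?_, fun hv x => by simpa [hJ x, hv] using hq_nonneg (x - x₀)⟩
  have hle : ∀ t > 0, ‖v‖ ^ 2 ≤ t * q v := fun t ht => by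
    have := hmin (x₀ + t • v)
    rw [hJ (x₀ + t • v), add_sub_cancel_left, hq_smul, real_inner_smul_left,
      real_inner_self_eq_norm_sq] at this
    nlinarith
  simpa using le_antisymm (nonpos_of_forall_pos_le_mul hle) (sq_nonneg ‖v‖)

section Lp

variable {α E F : Type*} [MeasurableSpace α] {μ : Measure α}

theorem ContinuousOn.memLp_top_restrict_Ioc [NormedAddCommGroup E] {g : ℝ → E} {a b : ℝ}
    (hg : ContinuousOn g (Icc a b)) : MemLp g ⊤ (volume.restrict (Ioc a b)) := by
  obtain ⟨M, hM⟩ := isCompact_Icc.exists_bound_of_continuousOn hg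
  exact memLp_top_of_bound ((hg.mono Ioc_subset_Icc_self).aestronglyMeasurable measurableSet_Ioc)
    M <| (ae_restrict_iff' measurableSet_Ioc).2 <|
      .of_forall fun s hs => hM s (Ioc_subset_Icc_self hs)

theorem MemLp.integrable_clm_apply [NormedAddCommGroup E] [NormedSpace ℝ E]
    [NormedAddCommGroup F] [NormedSpace ℝ F] {K : α → E →L[ℝ] F} {g : α → E}
    (hK : MemLp K ⊤ μ) (hg : Integrable g μ) : Integrable (fun a => K a (g a)) μ :=
  memLp_one_iff_integrable.1 <|
    (ContinuousLinearMap.id ℝ (E →L[ℝ] F)).memLp_of_bilin 1 hK (memLp_one_iff_integrable.2 hg)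

theorem integral_norm_sub_sq [NormedAddCommGroup E] [InnerProductSpace ℝ E] {f g : α → E}
    (hf : MemLp f 2 μ) (hg : MemLp g 2 μ) :
    ∫ a, ‖f a - g a‖ ^ 2 ∂μ
      = ∫ a, ‖f a‖ ^ 2 ∂μ - 2 * ∫ a, ⟪f a, g a⟫ ∂μ + ∫ a, ‖g a‖ ^ 2 ∂μ := by
  have hfg : Integrable (fun a => ⟪f a, g a⟫) μ :=
    memLp_one_iff_integrable.1 ((innerSL ℝ).memLp_of_bilin 1 hf hg)
  have hf2 : Integrable (fun a => ‖f a‖ ^ 2) μ := hf.norm.integrable_sq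
  simp_rw [norm_sub_sq_real]
  rw [integral_add (f := fun a => ‖f a‖ ^ 2 - 2 * ⟪f a, g a⟫) (hf2.sub (hfg.const_mul 2))
      hg.norm.integrable_sq,
    integral_sub hf2 (hfg.const_mul 2), integral_const_mul]

theorem integral_inner_apply_eq_inner_integral_adjoint [NormedAddCommGroup E]
    [InnerProductSpace ℝ E] [CompleteSpace E] [NormedAddCommGroup F] [InnerProductSpace ℝ F]
    [CompleteSpace F] {K : α → E →L[ℝ] F} {r : α → F}
    (hint : Integrable (fun a => adjoint (K a) (r a)) μ) (h : E) :
    ∫ a, ⟪r a, K a h⟫ ∂μ = ⟪∫ a, adjoint (K a) (r a) ∂μ, h⟫ := by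
  rw [real_inner_comm, ← integral_inner hint]
  refine integral_congr_ae (.of_forall fun a => ?_)
  dsimp only
  rw [← real_inner_comm h, adjoint_inner_left]

end Lp

theorem exp_sub_smul {𝔸 : Type*} [NormedRing 𝔸] [NormedAlgebra ℝ 𝔸] [CompleteSpace 𝔸]
    (a : 𝔸) (t s : ℝ) : exp ((t - s) • a) = exp (t • a) * exp ((-s) • a) := by
  -- `exp_add_of_commute` is stated for `ℚ`-algebras
  let : NormedAlgebra ℚ 𝔸 := .restrictScalars ℚ ℝ 𝔸
  rw [sub_eq_add_neg, add_smul, exp_add_of_commute (((Commute.refl a).smul_left t).smul_right _)]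

section MildSolution

variable {X : Type*} [NormedAddCommGroup X] [InnerProductSpace ℝ X] [CompleteSpace X]

theorem ContinuousLinearMap.adjoint_exp_smul (A : X →L[ℝ] X) (s : ℝ) :
    adjoint (exp (s • A)) = exp (s • adjoint A) := by
  rw [← star_eq_adjoint, ← star_eq_adjoint, star_exp, star_smul, star_trivial]

theorem continuous_exp_smul (A : X →L[ℝ] X) : Continuous fun t : ℝ => exp (t • A) :=
  (differentiable_exp_smul_const ℝ A).continuous

theorem mildSol_eq_add_exp_smul_sub (A : X →L[ℝ] X) (f : ℝ → X) (x₀ x : X) (t : ℝ) :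
    mildSol A f x t = mildSol A f x₀ t + exp (t • A) (x - x₀) := by
  simp only [mildSol, map_sub]
  abel

theorem mildSol_eq_exp_smul_apply (A : X →L[ℝ] X) {f : ℝ → X} {t : ℝ}
    (hf : IntervalIntegrable (fun s => exp ((-s) • A) (f s)) volume 0 t) (x : X) :
    mildSol A f x t = exp (t • A) (x + ∫ s in (0:ℝ)..t, exp ((-s) • A) (f s)) := by
  rw [mildSol, map_add, ← ContinuousLinearMap.intervalIntegral_comp_comm _ hf]
  congr 1
  refine intervalIntegral.integral_congr fun s _ => ?_
  exact congr($(exp_sub_smul A t s) (f s))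

theorem continuousOn_mildSol (A : X →L[ℝ] X) {f : ℝ → X} {T : ℝ}
    (hf : ContinuousOn f (Icc 0 T)) (x : X) : ContinuousOn (mildSol A f x) (Icc 0 T) := by
  have hg : ContinuousOn (fun s => exp ((-s) • A) (f s)) (Icc 0 T) :=
    ((continuous_exp_smul A).comp continuous_neg).continuousOn.clm_apply hf
  have hprim := intervalIntegral.continuousOn_primitive (μ := volume)
    (hg.integrableOn_compact isCompact_Icc)
  refine ((continuous_exp_smul A).continuousOn.clm_apply
    ((continuousOn_const (c := x)).add hprim)).congr fun t ht => ?_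
  have hsub : Icc 0 t ⊆ Icc 0 T := Icc_subset_Icc le_rfl ht.2
  rw [mildSol_eq_exp_smul_apply A ((hg.mono hsub).intervalIntegrable_of_Icc ht.1),
    intervalIntegral.integral_of_le ht.1]
  rfl

end MildSolution

section OutputCost

variable {X Y : Type*} [NormedAddCommGroup X] [InnerProductSpace ℝ X] [CompleteSpace X]
  [NormedAddCommGroup Y] [InnerProductSpace ℝ Y] [CompleteSpace Y]

theorem outputCost_eq_sub_inner_add (A : X →L[ℝ] X) (C : X →L[ℝ] Y) {f : ℝ → X} {y : ℝ → Y}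
    {T : ℝ} (hT : 0 ≤ T) (hf : ContinuousOn f (Icc 0 T))
    (hy : MemLp y 2 (volume.restrict (Ioc 0 T))) (x₀ x : X) :
    outputCost A C f y T x = outputCost A C f y T x₀
      - ⟪x - x₀, ∫ s in (0:ℝ)..T, exp (s • adjoint A) (adjoint C (y s - C (mildSol A f x₀ s)))⟫
      + 1 / 2 * ∫ s in Ioc 0 T, ‖C (exp (s • A) (x - x₀))‖ ^ 2 := by
  set r : ℝ → Y := fun s => y s - C (mildSol A f x₀ s)
  set K : ℝ → X →L[ℝ] Y := fun s => C ∘L exp (s • A)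
  have hK : Continuous K := continuous_const.clm_comp (continuous_exp_smul A)
  have hr : MemLp r 2 (volume.restrict (Ioc 0 T)) :=
    hy.sub <| (C.continuous.comp_continuousOn (continuousOn_mildSol A hf x₀))
      |>.memLp_top_restrict_Ioc.mono_exponent le_top
  have hKh : MemLp (fun s => K s (x - x₀)) 2 (volume.restrict (Ioc 0 T)) :=
    (hK.clm_apply continuous_const).continuousOn.memLp_top_restrict_Ioc.mono_exponent le_top
  have hadj : ∀ s, adjoint (K s) = exp (s • adjoint A) ∘L adjoint C := fun s => by
    rw [adjoint_comp, adjoint_exp_smul]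
  have hint : Integrable (fun s => adjoint (K s) (r s)) (volume.restrict (Ioc 0 T)) :=
    MemLp.integrable_clm_apply (adjoint.continuous.comp hK).continuousOn.memLp_top_restrict_Ioc
      (hr.integrable one_le_two)
  have hres : ∀ s, y s - C (mildSol A f x s) = r s - K s (x - x₀) := fun s => by
    simp only [r, K, mildSol_eq_add_exp_smul_sub A f x₀ x s, map_add, comp_apply]
    abel
  simp only [outputCost, intervalIntegral.integral_of_le hT, hres]
  rw [integral_norm_sub_sq hr hKh, integral_inner_apply_eq_inner_integral_adjoint hint,
    real_inner_comm (x - x₀)]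
  simp only [hadj, comp_apply, r, K]
  ring

end OutputCost

/-- A point `x°` minimizes the output-error cost `J` if and only if the output residual is
orthogonal to all simulated outputs, i.e. `∫₀ᵀ e^{sA*} C* (y(s) − C z[x°](s)) ds = 0`. -/
theorem outputCost_minimizer_iff_normal_equation
    {X Y : Type*} [NormedAddCommGroup X] [InnerProductSpace ℝ X] [CompleteSpace X]
    [NormedAddCommGroup Y] [InnerProductSpace ℝ Y] [CompleteSpace Y]
    (A : X →L[ℝ] X) (C : X →L[ℝ] Y) (T : ℝ) (hT : 0 < T)
    (f : ℝ → X) (hf : ContinuousOn f (Icc 0 T))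
    (y : ℝ → Y) (hy : MemLp y 2 (volume.restrict (Ioc 0 T)))
    (xo : X) :
    (∀ x : X, outputCost A C f y T xo ≤ outputCost A C f y T x) ↔
      (∫ s in (0:ℝ)..T, exp (s • ContinuousLinearMap.adjoint A)
          (ContinuousLinearMap.adjoint C (y s - C (mildSol A f xo s))) = 0) :=
  forall_le_iff_eq_zero_of_eq_sub_inner_add
    (q := fun h => 1 / 2 * ∫ s in Ioc 0 T, ‖C (exp (s • A) h)‖ ^ 2)
    (fun h => by positivity)
    (fun t h => by simp only [map_smul, norm_smul, mul_pow, Real.norm_eq_abs, sq_abs,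
      integral_const_mul]; ring)
    (outputCost_eq_sub_inner_add A C hT.le hf hy xo)
end

section
/- Let X and Y be real Hilbert spaces, A : X → X a bounded skew-adjoint operator (A* = −A), C : X → Y a bounded linear operator, κ > 0, T > 0, and χ ∈ L²(0,T;Y) satisfying ∫₀ᵀ e^{sA*} C* χ(s) ds = 0. Define ε(t) := −κ ∫₀ᵗ e^{(A − κC*C)(t−s)} C* χ(s) ds. Then ‖ε(T)‖ ≤ (2/3) κ² ‖C‖³ T^{3/2} ‖χ‖_{L²(0,T;Y)}. -/
open MeasureTheory NormedSpace ContinuousLinearMap Set RealInnerProductSpace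

/-!
The skew-adjoint `A` and the dissipative `L = A - κ C*C` both generate contraction semigroups, so
Duhamel's formula gives `‖e^{tL} - e^{tA}‖ ≤ ‖L - A‖ t ≤ κ ‖C‖² t`. The orthogonality hypothesis
says precisely that `∫₀ᵀ e^{(T-s)A} C*χ(s) ds = e^{TA} ∫₀ᵀ e^{-sA} C*χ(s) ds = 0`, so `e^{(T-s)L}`
may be replaced by `e^{(T-s)L} - e^{(T-s)A}` in `ε(T)`. Hence
`‖ε(T)‖ ≤ κ² ‖C‖³ ∫₀ᵀ (T - s) ‖χ(s)‖ ds ≤ κ² ‖C‖³ √(T³/3) ‖χ‖_{L²}` by Cauchy–Schwarz, and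
`1/√3 ≤ 2/3`.
-/

section Contraction

variable {X : Type*} [NormedAddCommGroup X] [InnerProductSpace ℝ X] [CompleteSpace X]

theorem norm_exp_smul_le_one_of_inner_map_self_nonpos {B : X →L[ℝ] X} (hB : ∀ x, ⟪B x, x⟫ ≤ 0)
    {t : ℝ} (ht : 0 ≤ t) : ‖exp (t • B)‖ ≤ 1 := by
  refine opNorm_le_bound _ zero_le_one fun x => ?_
  set u : ℝ → X := fun r => exp (r • B) x
  have hu : ∀ r, HasDerivAt u (B (u r)) r := fun r => by
    simpa [u] using (hasDerivAt_exp_smul_const' B r).clm_apply (hasDerivAt_const r x)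
  -- `‖u r‖²` has derivative `2 ⟪B (u r), u r⟫ ≤ 0`
  have hanti : Antitone fun r => ‖u r‖ ^ 2 := by
    refine antitone_of_deriv_nonpos (fun r => ((hu r).norm_sq).differentiableAt) fun r => ?_
    rw [((hu r).norm_sq).deriv]
    nlinarith [hB (u r), real_inner_comm (B (u r)) (u r)]
  have h := hanti ht
  simp only [u, zero_smul, exp_zero] at h
  simpa using pow_le_pow_iff_left₀ (norm_nonneg _) (norm_nonneg _) two_ne_zero |>.1 h

theorem inner_map_self_eq_zero_of_adjoint_eq_neg {A : X →L[ℝ] X} (hA : adjoint A = -A) (x : X) :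
    ⟪A x, x⟫ = 0 := by
  have h := adjoint_inner_left A x x
  rw [hA, neg_apply, inner_neg_left] at h
  linarith [real_inner_comm x (A x)]

theorem norm_exp_smul_le_one_of_adjoint_eq_neg {A : X →L[ℝ] X} (hA : adjoint A = -A) (r : ℝ) :
    ‖exp (r • A)‖ ≤ 1 := by
  rcases le_total 0 r with hr | hr
  · exact norm_exp_smul_le_one_of_inner_map_self_nonpos
      (fun x => (inner_map_self_eq_zero_of_adjoint_eq_neg hA x).le) hr
  · rw [← neg_neg r, neg_smul, ← smul_neg]
    exact norm_exp_smul_le_one_of_inner_map_self_nonpos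
      (fun x => by simp [inner_map_self_eq_zero_of_adjoint_eq_neg hA x]) (neg_nonneg.2 hr)

theorem inner_map_self_sub_smul_adjoint_comp_self_nonpos {Y : Type*} [NormedAddCommGroup Y]
    [InnerProductSpace ℝ Y] [CompleteSpace Y] {A : X →L[ℝ] X} (hA : ∀ x, ⟪A x, x⟫ ≤ 0)
    (C : X →L[ℝ] Y) {κ : ℝ} (hκ : 0 ≤ κ) (x : X) :
    ⟪(A - κ • (adjoint C).comp C) x, x⟫ ≤ 0 := by
  rw [sub_apply, inner_sub_left, smul_apply, inner_smul_left, comp_apply, adjoint_inner_left,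
    real_inner_self_eq_norm_sq]
  simp only [conj_trivial]
  nlinarith [hA x]

end Contraction

section BanachAlgebra

variable {𝔸 : Type*} [NormedRing 𝔸] [NormedAlgebra ℝ 𝔸] [CompleteSpace 𝔸]

theorem exp_sub_smul_eq_mul (a : 𝔸) (t s : ℝ) :
    exp ((t - s) • a) = exp (t • a) * exp ((-s) • a) := by
  -- `exp` does not depend on the `ℚ`-algebra structure; `exp_add_of_commute` merely needs one
  let : NormedAlgebra ℚ 𝔸 := NormedAlgebra.restrictScalars ℚ ℝ 𝔸
  rw [sub_eq_add_neg, add_smul]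
  exact exp_add_of_commute (((Commute.refl a).smul_left t).smul_right (-s))

theorem norm_exp_smul_sub_exp_smul_le {a b : 𝔸} (ha : ∀ r : ℝ, 0 ≤ r → ‖exp (r • a)‖ ≤ 1)
    (hb : ∀ r : ℝ, 0 ≤ r → ‖exp (r • b)‖ ≤ 1) {t : ℝ} (ht : 0 ≤ t) :
    ‖exp (t • b) - exp (t • a)‖ ≤ ‖b - a‖ * t := by
  set g : ℝ → 𝔸 := fun r => exp ((t - r) • a) * exp (r • b)
  set g' : ℝ → 𝔸 := fun r => exp ((t - r) • a) * (b - a) * exp (r • b)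
  have hg : ∀ r, HasDerivAt g (g' r) r := fun r => by
    have h₁ := (hasDerivAt_exp_smul_const a (t - r)).scomp r ((hasDerivAt_id r).const_sub t)
    have h : HasDerivAt g _ r := h₁.mul (hasDerivAt_exp_smul_const' b r)
    convert h using 1
    simp only [g', Function.comp_apply, neg_one_smul, neg_mul, mul_sub, sub_mul, mul_assoc]
    abel
  have hg' : ∀ r ∈ Ico 0 t, ‖g' r‖ ≤ ‖b - a‖ := fun r hr => by
    calc ‖g' r‖ ≤ ‖exp ((t - r) • a)‖ * ‖b - a‖ * ‖exp (r • b)‖ := norm_mul₃_le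
      _ ≤ 1 * ‖b - a‖ * 1 := by
        gcongr
        exacts [ha (t - r) (sub_nonneg.2 hr.2.le), hb r hr.1]
      _ = ‖b - a‖ := by ring
  have h := norm_image_sub_le_of_norm_deriv_le_segment'
    (fun r _ => (hg r).hasDerivWithinAt) hg' t (right_mem_Icc.2 ht)
  simpa [g] using h

end BanachAlgebra

section Integral

variable {E F : Type*} [NormedAddCommGroup E] [NormedSpace ℝ E] [NormedAddCommGroup F]
  [NormedSpace ℝ F] {μ : Measure ℝ} {a b : ℝ}

theorem IntervalIntegrable.continuous_clm_apply {L : ℝ → E →L[ℝ] F} (hL : Continuous L)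
    {w : ℝ → E} (hw : IntervalIntegrable w μ a b) :
    IntervalIntegrable (fun s => L s (w s)) μ a b := by
  obtain ⟨M, hM⟩ := isCompact_uIcc.exists_bound_of_continuousOn hL.continuousOn
  rw [intervalIntegrable_iff] at hw ⊢
  refine (hw.norm.const_mul M).mono' ?_ ?_
  · exact isBoundedBilinearMap_apply.continuous.comp_aestronglyMeasurable
      (hL.aestronglyMeasurable.prodMk hw.aestronglyMeasurable)
  · refine ae_restrict_of_forall_mem measurableSet_uIoc fun s hs => ?_
    exact (le_opNorm _ _).trans
      (mul_le_mul_of_nonneg_right (hM s (uIoc_subset_uIcc hs)) (norm_nonneg _))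

variable [CompleteSpace E]

theorem intervalIntegral_exp_sub_smul_apply (A : E →L[ℝ] E) {w : ℝ → E} {T : ℝ}
    (hw : IntervalIntegrable w μ 0 T) :
    ∫ s in 0..T, exp ((T - s) • A) (w s) ∂μ
      = exp (T • A) (∫ s in 0..T, exp ((-s) • A) (w s) ∂μ) := by
  simp only [exp_sub_smul_eq_mul A T]
  exact (exp (T • A)).intervalIntegral_comp_comm
    (hw.continuous_clm_apply ((differentiable_exp_smul_const ℝ A).continuous.comp continuous_neg))

theorem norm_intervalIntegral_exp_smul_apply_le {a b : E →L[ℝ] E}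
    (ha : ∀ r : ℝ, 0 ≤ r → ‖exp (r • a)‖ ≤ 1) (hb : ∀ r : ℝ, 0 ≤ r → ‖exp (r • b)‖ ≤ 1)
    (K : F →L[ℝ] E) {χ : ℝ → F} {T : ℝ} (hT : 0 ≤ T) (hχ : IntervalIntegrable χ μ 0 T)
    (h₀ : ∫ s in 0..T, exp ((T - s) • a) (K (χ s)) ∂μ = 0) :
    ‖∫ s in 0..T, exp ((T - s) • b) (K (χ s)) ∂μ‖
      ≤ ‖b - a‖ * ‖K‖ * ∫ s in 0..T, (T - s) * ‖χ s‖ ∂μ := by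
  have hint : ∀ c : E →L[ℝ] E,
      IntervalIntegrable (fun s => exp ((T - s) • c) (K (χ s))) μ 0 T := fun c =>
    hχ.continuous_clm_apply (L := fun s => (exp ((T - s) • c)).comp K)
      (((differentiable_exp_smul_const ℝ c).continuous.comp (by fun_prop)).clm_comp
        continuous_const)
  calc ‖∫ s in 0..T, exp ((T - s) • b) (K (χ s)) ∂μ‖
      = ‖∫ s in 0..T, (exp ((T - s) • b) - exp ((T - s) • a)) (K (χ s)) ∂μ‖ := by
        simp only [sub_apply]
        rw [intervalIntegral.integral_sub (hint b) (hint a), h₀, sub_zero]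
    _ ≤ ∫ s in 0..T, ‖b - a‖ * ‖K‖ * ((T - s) * ‖χ s‖) ∂μ := by
        refine intervalIntegral.norm_integral_le_of_norm_le hT (ae_of_all _ fun s hs => ?_)
          ((hχ.norm.continuousOn_mul (by fun_prop)).const_mul _)
        have hs' : 0 ≤ T - s := sub_nonneg.2 hs.2
        calc _ ≤ ‖exp ((T - s) • b) - exp ((T - s) • a)‖ * (‖K‖ * ‖χ s‖) :=
              (le_opNorm _ _).trans (by gcongr; exact le_opNorm _ _)
          _ ≤ ‖b - a‖ * (T - s) * (‖K‖ * ‖χ s‖) := by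
              gcongr; exact norm_exp_smul_sub_exp_smul_le ha hb hs'
          _ = _ := by ring
    _ = ‖b - a‖ * ‖K‖ * ∫ s in 0..T, (T - s) * ‖χ s‖ ∂μ :=
        intervalIntegral.integral_const_mul _ _

end Integral

theorem intervalIntegral_mul_le_sqrt_mul_sqrt {f g : ℝ → ℝ} {a b : ℝ} (hab : a ≤ b)
    (hf₀ : 0 ≤ᵐ[volume.restrict (Ioc a b)] f) (hg₀ : 0 ≤ᵐ[volume.restrict (Ioc a b)] g)
    (hf : MemLp f 2 (volume.restrict (Ioc a b))) (hg : MemLp g 2 (volume.restrict (Ioc a b))) :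
    ∫ s in a..b, f s * g s ≤ √(∫ s in a..b, f s ^ 2) * √(∫ s in a..b, g s ^ 2) := by
  have h := integral_mul_le_Lp_mul_Lq_of_nonneg Real.HolderConjugate.two_two hf₀ hg₀
    (by simpa using hf) (by simpa using hg)
  simp only [Real.rpow_two] at h
  simpa only [intervalIntegral.integral_of_le hab, Real.sqrt_eq_rpow] using h

theorem intervalIntegral_sub_mul_le {g : ℝ → ℝ} {T : ℝ} (hT : 0 ≤ T)
    (hg₀ : 0 ≤ᵐ[volume.restrict (Ioc 0 T)] g) (hg : MemLp g 2 (volume.restrict (Ioc 0 T))) :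
    ∫ s in 0..T, (T - s) * g s ≤ √(T ^ 3 / 3) * √(∫ s in 0..T, g s ^ 2) := by
  have hsub : MemLp (fun s => T - s) 2 (volume.restrict (Ioc 0 T)) :=
    .of_bound (by fun_prop : Continuous fun s : ℝ => T - s).aestronglyMeasurable T
      (ae_restrict_of_forall_mem measurableSet_Ioc fun s hs => by
        rw [Real.norm_of_nonneg (sub_nonneg.2 hs.2)]; linarith [hs.1])
  have hsq : ∫ s in 0..T, (T - s) ^ 2 = T ^ 3 / 3 := by
    rw [intervalIntegral.integral_comp_sub_left (fun u => u ^ 2) T, sub_self, sub_zero,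
      integral_pow]
    ring
  simpa only [hsq] using intervalIntegral_mul_le_sqrt_mul_sqrt hT
    (ae_restrict_of_forall_mem measurableSet_Ioc fun s hs => sub_nonneg.2 hs.2) hg₀ hsub hg

theorem sqrt_pow_three_div_three_le {T : ℝ} (hT : 0 ≤ T) :
    √(T ^ 3 / 3) ≤ 2 / 3 * T ^ ((3 : ℝ) / 2) := by
  have hT' : √(T ^ 3) = T ^ ((3 : ℝ) / 2) := by
    rw [Real.sqrt_eq_rpow, ← Real.rpow_natCast, ← Real.rpow_mul hT]
    norm_num
  rw [Real.sqrt_div' _ (by norm_num), hT', div_eq_inv_mul]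
  gcongr
  rw [inv_le_iff_one_le_mul₀ (by positivity)]
  nlinarith [Real.sq_sqrt (show (0:ℝ) ≤ 3 by norm_num), Real.sqrt_nonneg 3]

/-- Second-order bound for the noise-driven observer error term when the noise is
orthogonal to the simulated outputs:
`‖ε(T)‖ ≤ (2/3) κ² ‖C‖³ T^{3/2} ‖χ‖_{L²(0,T;Y)}`. -/
theorem noise_error_second_order_bound
    {X Y : Type*} [NormedAddCommGroup X] [InnerProductSpace ℝ X] [CompleteSpace X]
    [NormedAddCommGroup Y] [InnerProductSpace ℝ Y] [CompleteSpace Y]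
    (A : X →L[ℝ] X) (hA : ContinuousLinearMap.adjoint A = -A)
    (C : X →L[ℝ] Y) (κ T : ℝ) (hκ : 0 < κ) (hT : 0 < T)
    (χ : ℝ → Y) (hχ : MemLp χ 2 (volume.restrict (Ioc 0 T)))
    (hperp : ∫ s in (0:ℝ)..T, exp (s • ContinuousLinearMap.adjoint A)
        (ContinuousLinearMap.adjoint C (χ s)) = 0)
    (ε : ℝ → X)
    (hε : ∀ t : ℝ, ε t = -(κ • ∫ s in (0:ℝ)..t,
      exp ((t - s) • (A - κ • ((ContinuousLinearMap.adjoint C).comp C)))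
        (ContinuousLinearMap.adjoint C (χ s)))) :
    ‖ε T‖ ≤ (2 / 3) * κ ^ 2 * ‖C‖ ^ 3 * T ^ ((3:ℝ) / 2) *
      Real.sqrt (∫ s in (0:ℝ)..T, ‖χ s‖ ^ 2) := by
  set L := A - κ • (adjoint C).comp C
  have hL : ∀ r : ℝ, 0 ≤ r → ‖exp (r • L)‖ ≤ 1 := fun r =>
    norm_exp_smul_le_one_of_inner_map_self_nonpos <|
      inner_map_self_sub_smul_adjoint_comp_self_nonpos
        (fun x => (inner_map_self_eq_zero_of_adjoint_eq_neg hA x).le) C hκ.le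
  have hLA : ‖L - A‖ = κ * ‖C‖ ^ 2 := by
    rw [sub_sub_cancel_left, norm_neg, norm_smul, norm_adjoint_comp_self,
      Real.norm_of_nonneg hκ.le, sq]
  have hχint : IntervalIntegrable χ volume 0 T :=
    (intervalIntegrable_iff_integrableOn_Ioc_of_le hT.le).2 (hχ.integrable one_le_two)
  have h₀ : ∫ s in 0..T, exp ((T - s) • A) (adjoint C (χ s)) = 0 := by
    have hperp' : ∫ s in 0..T, exp ((-s) • A) (adjoint C (χ s)) = 0 := by
      simpa only [hA, smul_neg, ← neg_smul] using hperp
    rw [intervalIntegral_exp_sub_smul_apply A (hχint.continuous_clm_apply continuous_const), hperp',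
      map_zero]
  have hCS := intervalIntegral_sub_mul_le hT.le (ae_of_all _ fun s => norm_nonneg (χ s)) hχ.norm
  calc ‖ε T‖ = κ * ‖∫ s in 0..T, exp ((T - s) • L) (adjoint C (χ s))‖ := by
        rw [hε, norm_neg, norm_smul, Real.norm_of_nonneg hκ.le]
    _ ≤ κ * (‖L - A‖ * ‖adjoint C‖ * ∫ s in 0..T, (T - s) * ‖χ s‖) := by
        gcongr
        exact norm_intervalIntegral_exp_smul_apply_le
          (fun r _ => norm_exp_smul_le_one_of_adjoint_eq_neg hA r) hL _ hT.le hχint h₀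
    _ ≤ κ * (κ * ‖C‖ ^ 2 * ‖C‖ * (2 / 3 * T ^ ((3 : ℝ) / 2) * √(∫ s in 0..T, ‖χ s‖ ^ 2))) := by
        rw [hLA, LinearIsometryEquiv.norm_map]
        gcongr
        exact hCS.trans (by gcongr; exact sqrt_pow_three_div_three_le hT.le)
    _ = _ := by ring
end

section
/- Let X be a real Hilbert space and A : X → X a bounded linear operator with A + A* = −Q where Q is a bounded positive semidefinite self-adjoint operator. Then for every t ≥ 0, ‖e^{tA} e^{tA*} − e^{−‖Q/2‖t} I‖ ≤ 1 − e^{−‖Q/2‖t}, where ‖Q/2‖ = ‖Q‖/2. -/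
open NormedSpace ContinuousLinearMap RealInnerProductSpace

open scoped InnerProduct

/-!
With `E = e^{tA*}` we have `e^{tA} = E*`, so `e^{tA} e^{tA*} = E* E` is self-adjoint with quadratic
form `‖E x‖²`. Along `s ↦ e^{sA*} x` the derivative of `‖·‖²` is `-⟪Q v, v⟫ ∈ [-‖Q‖ ‖v‖², 0]`, so
by Gronwall `c² ‖x‖² ≤ ‖E x‖² ≤ ‖x‖²` with `c = e^{-‖Q‖t/2}`. Since `c² - c ≥ -(1 - c)`, the
quadratic form of `E* E - c` is bounded by `(1 - c) ‖x‖²`, and for a symmetric operator this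
bounds the norm.
-/

theorem exp_neg_mul_mul_le_of_hasDerivAt {f f' : ℝ → ℝ} {K : ℝ}
    (hf : ∀ s, HasDerivAt f (f' s) s) (hf' : ∀ s, -K * f s ≤ f' s) {t : ℝ} (ht : 0 ≤ t) :
    Real.exp (-K * t) * f 0 ≤ f t := by
  have hg : ∀ s, HasDerivAt (fun s => Real.exp (s * K) * f s)
      (Real.exp (s * K) * K * f s + Real.exp (s * K) * f' s) s := fun s =>
    (hasDerivAt_mul_const K).exp.mul (hf s)
  have hmono := monotone_of_hasDerivAt_nonneg hg fun s => by
    show 0 ≤ _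
    nlinarith [mul_le_mul_of_nonneg_left (hf' s) (Real.exp_pos (s * K)).le]
  have h0t : f 0 ≤ Real.exp (t * K) * f t := by simpa using hmono ht
  calc Real.exp (-K * t) * f 0 ≤ Real.exp (-K * t) * (Real.exp (t * K) * f t) := by gcongr
    _ = f t := by rw [← mul_assoc, ← Real.exp_add]; ring_nf; simp

section

variable {𝕜 E : Type*} [RCLike 𝕜] [NormedAddCommGroup E] [InnerProductSpace 𝕜 E]

theorem ContinuousLinearMap.opNorm_le_of_abs_reApplyInnerSelf_le {T : E →L[𝕜] E}
    (hT : (T : E →ₗ[𝕜] E).IsSymmetric) {C : ℝ} (hC : 0 ≤ C)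
    (h : ∀ x, |T.reApplyInnerSelf x| ≤ C * ‖x‖ ^ 2) : ‖T‖ ≤ C := by
  rw [T.norm_eq_iSup_rayleighQuotient hT]
  refine ciSup_le fun x => ?_
  rcases eq_or_ne x 0 with rfl | hx
  · simpa using hC
  · rw [rayleighQuotient, abs_div, abs_sq, div_le_iff₀ (by positivity)]
    exact h x

end

section

variable {X : Type*} [NormedAddCommGroup X] [InnerProductSpace ℝ X] [CompleteSpace X]

theorem hasDerivAt_norm_sq_exp_smul_apply (B : X →L[ℝ] X) (x : X) (s : ℝ) :
    HasDerivAt (fun s : ℝ => ‖exp (s • B) x‖ ^ 2)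
      ⟪(B + B†) (exp (s • B) x), exp (s • B) x⟫ s := by
  have hu : HasDerivAt (fun s : ℝ => exp (s • B) x) (B (exp (s • B) x)) s := by
    simpa using (hasDerivAt_exp_smul_const' (𝕂 := ℝ) B s).clm_apply (hasDerivAt_const s x)
  convert hu.norm_sq using 1
  rw [add_apply, inner_add_left, adjoint_inner_left, real_inner_comm]
  ring

section Dissipative

variable {B Q : X →L[ℝ] X}

theorem norm_sq_exp_smul_apply_le (hBQ : B + B† = -Q) (hQ : ∀ x, 0 ≤ ⟪Q x, x⟫) (x : X)
    {t : ℝ} (ht : 0 ≤ t) : ‖exp (t • B) x‖ ^ 2 ≤ ‖x‖ ^ 2 := by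
  have hanti := antitone_of_hasDerivAt_nonpos (hasDerivAt_norm_sq_exp_smul_apply B x)
    fun s => by simpa [hBQ] using hQ (exp (s • B) x)
  simpa using hanti ht

theorem exp_neg_mul_norm_sq_le_norm_sq_exp_smul_apply (hBQ : B + B† = -Q) (x : X) {t : ℝ}
    (ht : 0 ≤ t) : Real.exp (-‖Q‖ * t) * ‖x‖ ^ 2 ≤ ‖exp (t • B) x‖ ^ 2 := by
  have hdecay (s : ℝ) :
      -‖Q‖ * ‖exp (s • B) x‖ ^ 2 ≤ ⟪(B + B†) (exp (s • B) x), exp (s • B) x⟫ := by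
    set v := exp (s • B) x
    rw [hBQ, neg_apply, inner_neg_left, neg_mul, neg_le_neg_iff]
    calc ⟪Q v, v⟫ ≤ ‖Q v‖ * ‖v‖ := real_inner_le_norm _ _
      _ ≤ ‖Q‖ * ‖v‖ * ‖v‖ := by gcongr; exact Q.le_opNorm v
      _ = ‖Q‖ * ‖v‖ ^ 2 := by ring
  simpa using exp_neg_mul_mul_le_of_hasDerivAt (hasDerivAt_norm_sq_exp_smul_apply B x) hdecay ht

end Dissipative

theorem norm_adjoint_comp_self_sub_smul_one_le (E : X →L[ℝ] X) {c : ℝ} (hc₀ : 0 ≤ c)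
    (hc₁ : c ≤ 1) (hlower : ∀ x, c ^ 2 * ‖x‖ ^ 2 ≤ ‖E x‖ ^ 2) (hupper : ∀ x, ‖E x‖ ^ 2 ≤ ‖x‖ ^ 2) :
    ‖E† ∘L E - c • (1 : X →L[ℝ] X)‖ ≤ 1 - c := by
  have hsymm : ((E† ∘L E - c • (1 : X →L[ℝ] X) : X →L[ℝ] X) : X →ₗ[ℝ] X).IsSymmetric :=
    ((IsSelfAdjoint.star_mul_self E).sub
      ((IsSelfAdjoint.all c).smul (IsSelfAdjoint.one _))).isSymmetric
  refine opNorm_le_of_abs_reApplyInnerSelf_le hsymm (by linarith) fun x => ?_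
  have hform :
      (E† ∘L E - c • (1 : X →L[ℝ] X)).reApplyInnerSelf x = ‖E x‖ ^ 2 - c * ‖x‖ ^ 2 := by
    simp [reApplyInnerSelf_apply, inner_sub_left, apply_norm_sq_eq_inner_adjoint_left,
      real_inner_smul_left]
  rw [hform, abs_le]
  constructor <;> nlinarith [hlower x, hupper x, sq_nonneg ‖x‖]

end

theorem exp_mul_exp_adjoint_scalar_approx_general
    {X : Type*} [NormedAddCommGroup X] [InnerProductSpace ℝ X] [CompleteSpace X]
    (A Q : X →L[ℝ] X)
    (hAQ : A + ContinuousLinearMap.adjoint A = -Q)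
    (hQpos : ∀ x : X, 0 ≤ ⟪Q x, x⟫) :
    ∀ t : ℝ, 0 ≤ t →
      ‖(exp (t • A)).comp (exp (t • ContinuousLinearMap.adjoint A)) -
          Real.exp (-(‖Q‖ / 2) * t) • (1 : X →L[ℝ] X)‖
        ≤ 1 - Real.exp (-(‖Q‖ / 2) * t) := by
  intro t ht
  have hdiss : A† + A†† = -Q := by rw [adjoint_adjoint, add_comm, hAQ]
  have hadj : (exp (t • A†))† = exp (t • A) := by
    rw [← star_eq_adjoint, star_exp, star_smul, star_trivial, star_eq_adjoint, adjoint_adjoint]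
  have hsq : Real.exp (-(‖Q‖ / 2) * t) ^ 2 = Real.exp (-‖Q‖ * t) := by
    rw [← Real.exp_nat_mul]; ring_nf
  rw [← hadj]
  refine norm_adjoint_comp_self_sub_smul_one_le _ (Real.exp_pos _).le
    (Real.exp_le_one_iff.mpr (by nlinarith [norm_nonneg Q])) (fun x => ?_)
    (fun x => norm_sq_exp_smul_apply_le hdiss hQpos x ht)
  rw [hsq]
  exact exp_neg_mul_norm_sq_le_norm_sq_exp_smul_apply hdiss x ht

/-- If `A + A* = -Q` with `Q ≥ 0`, then
`‖e^{tA} e^{tA*} − e^{−‖Q/2‖t} I‖ ≤ 1 − e^{−‖Q/2‖t}` for every `t ≥ 0`. -/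
theorem exp_mul_exp_adjoint_scalar_approx
    {X : Type*} [NormedAddCommGroup X] [InnerProductSpace ℝ X] [CompleteSpace X]
    (A Q : X →L[ℝ] X)
    (hAQ : A + ContinuousLinearMap.adjoint A = -Q)
    (hQsa : ContinuousLinearMap.adjoint Q = Q)
    (hQpos : ∀ x : X, 0 ≤ ⟪Q x, x⟫) :
    ∀ t : ℝ, 0 ≤ t →
      ‖(exp (t • A)).comp (exp (t • ContinuousLinearMap.adjoint A)) -
          Real.exp (-(‖Q‖ / 2) * t) • (1 : X →L[ℝ] X)‖
        ≤ 1 - Real.exp (-(‖Q‖ / 2) * t) :=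
  exp_mul_exp_adjoint_scalar_approx_general A Q hAQ hQpos
end
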